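/- Let M be a finite monoid, α : A* → M a morphism, and for n ∈ ℕ let C_n ⊆ M^n be the set of i-chains of length n (tuples (s₁,…,sₙ) such that for every k there exist words w₁ ≤ᵏᵢ ⋯ ≤ᵏᵢ wₙ with α(w_j) = s_j). Then C_n is a submonoid of M^n under componentwise multiplication. -/

import Mathlib

/-!
Feferman–Vaught for concatenation. Assign each free variable to one of the factors of
`u ++ v`. By induction on `φ`, satisfaction of `φ` in `u ++ v` is equivalent to a finite
disjunction of terms `α(u) ∧ β(v)` whose conjuncts stay in `Σᵢ`, have quantifier rank at most
`qr φ`, and are sentences when `φ` is one: negation only meets quantifier-free formulas, `∃` over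
`u ++ v` is `∃` over `u` or `∃` over `v`, and `∀ x ∈ u` distributes over a disjunction of terms
by guessing the set `S` of terms whose `v`-part holds, giving
`(∀ x ∈ u, ⋁_{t ∈ S} αₜ) ∧ ⋀_{t ∈ S} βₜ`. Transferring each conjunct separately shows that
`≤ᵏᵢ` is compatible with concatenation, so chains multiply componentwise by concatenating their
witnesses.
-/

/-- First-order formulas over words on alphabet `A`, with de Bruijn indexed
variables, unary letter predicates `P_a x` and the order predicate `x < y`. -/
inductive FO (A : Type) : Type
  | letter : A → ℕ → FO A
  | lt : ℕ → ℕ → FO A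
  | not : FO A → FO A
  | and : FO A → FO A → FO A
  | or : FO A → FO A → FO A
  | ex : FO A → FO A
  | all : FO A → FO A

namespace FO

variable {A : Type}

/-- Satisfaction of a formula in a word `w` under an assignment `v` of
variables to positions; quantifiers range over the positions of `w`,
`letter a x` holds when position `v x` carries the letter `a`. -/
def Sat (w : List A) : (ℕ → ℕ) → FO A → Prop
  | v, letter a x => w[(v x)]? = some a
  | v, lt x y => v x < v y ∧ v y < w.length
  | v, not φ => ¬ Sat w v φ
  | v, and φ ψ => Sat w v φ ∧ Sat w v ψ
  | v, or φ ψ => Sat w v φ ∨ Sat w v ψ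
  | v, ex φ => ∃ p < w.length, Sat w (fun n => Nat.casesOn n p v) φ
  | v, all φ => ∀ p < w.length, Sat w (fun n => Nat.casesOn n p v) φ

/-- Quantifier rank of a formula. -/
def qr : FO A → ℕ
  | letter _ _ => 0
  | lt _ _ => 0
  | not φ => qr φ
  | and φ ψ => max (qr φ) (qr ψ)
  | or φ ψ => max (qr φ) (qr ψ)
  | ex φ => qr φ + 1
  | all φ => qr φ + 1

/-- A bound on free (de Bruijn) variables: all free variables are `< fvBound φ`. -/
def fvBound : FO A → ℕ
  | letter _ x => x + 1
  | lt x y => max x y + 1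
  | not φ => fvBound φ
  | and φ ψ => max (fvBound φ) (fvBound ψ)
  | or φ ψ => max (fvBound φ) (fvBound ψ)
  | ex φ => fvBound φ - 1
  | all φ => fvBound φ - 1

/-- A sentence is a formula with no free variables. -/
def IsSentence (φ : FO A) : Prop := fvBound φ = 0

/-- Quantifier-free formulas. -/
def QF : FO A → Prop
  | letter _ _ => True
  | lt _ _ => True
  | not φ => QF φ
  | and φ ψ => QF φ ∧ QF ψ
  | or φ ψ => QF φ ∧ QF ψ
  | ex _ => False
  | all _ => False

mutual
  /-- `Σᵢ` formulas: quantifier-free formulas, positive boolean combinations,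
  existential quantification over `Σᵢ` (for `i ≥ 1`), and every `Πᵢ` formula
  is `Σ_{i+1}`; this captures formulas whose prenex normal form has at most
  `i` quantifier blocks starting with an existential block. -/
  inductive IsSigma : ℕ → FO A → Prop
    | of_qf {i : ℕ} {φ : FO A} : QF φ → IsSigma i φ
    | of_pi {i : ℕ} {φ : FO A} : IsPi i φ → IsSigma (i + 1) φ
    | and {i : ℕ} {φ ψ : FO A} : IsSigma i φ → IsSigma i ψ → IsSigma i (FO.and φ ψ)
    | or {i : ℕ} {φ ψ : FO A} : IsSigma i φ → IsSigma i ψ → IsSigma i (FO.or φ ψ)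
    | ex {i : ℕ} {φ : FO A} : IsSigma (i + 1) φ → IsSigma (i + 1) (FO.ex φ)
  /-- `Πᵢ` formulas, dual to `Σᵢ`. -/
  inductive IsPi : ℕ → FO A → Prop
    | of_qf {i : ℕ} {φ : FO A} : QF φ → IsPi i φ
    | of_sigma {i : ℕ} {φ : FO A} : IsSigma i φ → IsPi (i + 1) φ
    | and {i : ℕ} {φ ψ : FO A} : IsPi i φ → IsPi i ψ → IsPi i (FO.and φ ψ)
    | or {i : ℕ} {φ ψ : FO A} : IsPi i φ → IsPi i ψ → IsPi i (FO.or φ ψ)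
    | all {i : ℕ} {φ : FO A} : IsPi (i + 1) φ → IsPi (i + 1) (FO.all φ)
end

/-- The preorder `w ≤ᵏᵢ w'`: every `Σᵢ` sentence of quantifier rank at most
`k` satisfied by `w` is satisfied by `w'`. -/
def sle (i k : ℕ) (w w' : List A) : Prop :=
  ∀ φ : FO A, IsSigma i φ → qr φ ≤ k → IsSentence φ →
    Sat w (fun _ => 0) φ → Sat w' (fun _ => 0) φ

end FO

/-- `(s₁,…,sₙ)` is an `i`-chain of length `n` for `α` if for every `k` there
exist words `w₁ ≤ᵏᵢ ⋯ ≤ᵏᵢ wₙ` with `α wⱼ = sⱼ`. -/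
def IsChainTup {A M : Type} (i : ℕ) (α : List A → M) {n : ℕ} (s : Fin n → M) : Prop :=
  ∀ k : ℕ, ∃ w : Fin n → List A,
    (∀ j : Fin n, α (w j) = s j) ∧
    ∀ (j : ℕ) (h : j + 1 < n),
      FO.sle i k (w ⟨j, Nat.lt_of_succ_lt h⟩) (w ⟨j + 1, h⟩)

theorem Nat.exists_lt_add_iff {m n : ℕ} {P : ℕ → Prop} :
    (∃ p < m + n, P p) ↔ (∃ p < m, P p) ∨ ∃ q < n, P (m + q) := by
  constructor
  · rintro ⟨p, hp, h⟩
    rcases lt_or_ge p m with hpm | hpm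
    · exact .inl ⟨p, hpm, h⟩
    · obtain ⟨q, rfl⟩ := Nat.exists_eq_add_of_le hpm
      exact .inr ⟨q, by omega, h⟩
  · rintro (⟨p, hp, h⟩ | ⟨q, hq, h⟩)
    · exact ⟨p, by omega, h⟩
    · exact ⟨m + q, by omega, h⟩

theorem Nat.forall_lt_add_iff {m n : ℕ} {P : ℕ → Prop} :
    (∀ p < m + n, P p) ↔ (∀ p < m, P p) ∧ ∀ q < n, P (m + q) := by
  constructor
  · intro h
    exact ⟨fun p hp => h p (by omega), fun q hq => h (m + q) (by omega)⟩
  · rintro ⟨h₁, h₂⟩ p hp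
    rcases lt_or_ge p m with hpm | hpm
    · exact h₁ p hpm
    · obtain ⟨q, rfl⟩ := Nat.exists_eq_add_of_le hpm
      exact h₂ q (by omega)

namespace FO

variable {A : Type}

def vcons {α : Type} (a : α) (f : ℕ → α) : ℕ → α := fun n => Nat.casesOn n a f

@[simp] theorem vcons_zero {α : Type} (a : α) (f : ℕ → α) : vcons a f 0 = a := rfl

@[simp] theorem vcons_succ {α : Type} (a : α) (f : ℕ → α) (n : ℕ) : vcons a f (n + 1) = f n :=
  rfl

theorem sat_ex {w : List A} {v : ℕ → ℕ} {φ : FO A} :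
    Sat w v (ex φ) ↔ ∃ p < w.length, Sat w (vcons p v) φ := Iff.rfl

theorem sat_all {w : List A} {v : ℕ → ℕ} {φ : FO A} :
    Sat w v (all φ) ↔ ∀ p < w.length, Sat w (vcons p v) φ := Iff.rfl

def verum : FO A := not (lt 0 0)

def falsum : FO A := lt 0 0

def bigAnd (l : List (FO A)) : FO A := l.foldr and verum

def bigOr (l : List (FO A)) : FO A := l.foldr or falsum

theorem sat_bigAnd {w : List A} {v : ℕ → ℕ} {l : List (FO A)} :
    Sat w v (bigAnd l) ↔ ∀ f ∈ l, Sat w v f := by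
  induction l with
  | nil => simp [bigAnd, verum, Sat]
  | cons f l ih => simp [bigAnd, Sat, ← ih]

theorem sat_bigOr {w : List A} {v : ℕ → ℕ} {l : List (FO A)} :
    Sat w v (bigOr l) ↔ ∃ f ∈ l, Sat w v f := by
  induction l with
  | nil => simp [bigOr, falsum, Sat]
  | cons f l ih => simp [bigOr, Sat, ← ih]

theorem bigAnd_induction {P : FO A → Prop} (hverum : P verum)
    (hand : ∀ f g, P f → P g → P (and f g)) {l : List (FO A)} (h : ∀ f ∈ l, P f) :
    P (bigAnd l) := by
  induction l with
  | nil => exact hverum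
  | cons f l ih => exact hand _ _ (h f (by simp)) (ih fun g hg => h g (by simp [hg]))

theorem bigOr_induction {P : FO A → Prop} (hfalsum : P falsum)
    (hor : ∀ f g, P f → P g → P (or f g)) {l : List (FO A)} (h : ∀ f ∈ l, P f) :
    P (bigOr l) := by
  induction l with
  | nil => exact hfalsum
  | cons f l ih => exact hor _ _ (h f (by simp)) (ih fun g hg => h g (by simp [hg]))

/-- A side assignment `σ` puts the variable `x` in `u` if `σ x = true` and in `v` otherwise;
`sideIdx σ b x` is the de Bruijn index of `x` among the variables on side `b`. -/
def sideIdx (σ : ℕ → Bool) (b : Bool) : ℕ → ℕ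
  | 0 => 0
  | n + 1 => sideIdx σ b n + if σ n = b then 1 else 0

@[simp] theorem sideIdx_zero (σ : ℕ → Bool) (b : Bool) : sideIdx σ b 0 = 0 := rfl

theorem sideIdx_succ_of_eq {σ : ℕ → Bool} {b : Bool} {n : ℕ} (h : σ n = b) :
    sideIdx σ b (n + 1) = sideIdx σ b n + 1 := by
  simp [sideIdx, h]

theorem sideIdx_mono (σ : ℕ → Bool) (b : Bool) : Monotone (sideIdx σ b) :=
  monotone_nat_of_le_succ fun n => by simp [sideIdx]

theorem sideIdx_vcons_succ (σ : ℕ → Bool) (b c : Bool) (n : ℕ) :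
    sideIdx (vcons c σ) b (n + 1) = sideIdx σ b n + if c = b then 1 else 0 := by
  induction n with
  | zero => simp only [sideIdx, vcons_zero, zero_add]; congr
  | succ n ih => rw [sideIdx, ih, vcons_succ, sideIdx]; omega

theorem sideIdx_vcons_self_le (σ : ℕ → Bool) (b : Bool) (m : ℕ) :
    sideIdx (vcons b σ) b m ≤ sideIdx σ b (m - 1) + 1 := by
  cases m with
  | zero => simp
  | succ m => simp [sideIdx_vcons_succ]

theorem sideIdx_vcons_of_ne_le {σ : ℕ → Bool} {b c : Bool} (h : c ≠ b) (m : ℕ) :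
    sideIdx (vcons c σ) b m ≤ sideIdx σ b (m - 1) := by
  cases m with
  | zero => simp
  | succ m => simp [sideIdx_vcons_succ, h]

def mergeVal (σ : ℕ → Bool) (n : ℕ) (vu vv : ℕ → ℕ) : ℕ → ℕ := fun x =>
  if σ x then vu (sideIdx σ true x) else n + vv (sideIdx σ false x)

theorem vcons_mergeVal_left (σ : ℕ → Bool) (n p : ℕ) (vu vv : ℕ → ℕ) :
    vcons p (mergeVal σ n vu vv) = mergeVal (vcons true σ) n (vcons p vu) vv := by
  funext x
  cases x with
  | zero => simp [mergeVal]
  | succ x => cases h : σ x <;> simp [mergeVal, sideIdx_vcons_succ, h]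

theorem vcons_mergeVal_right (σ : ℕ → Bool) (n q : ℕ) (vu vv : ℕ → ℕ) :
    vcons (n + q) (mergeVal σ n vu vv) = mergeVal (vcons false σ) n vu (vcons q vv) := by
  funext x
  cases x with
  | zero => simp [mergeVal]
  | succ x => cases h : σ x <;> simp [mergeVal, sideIdx_vcons_succ, h]

def InRange (σ : ℕ → Bool) (u v : List A) (vu vv : ℕ → ℕ) (m : ℕ) : Prop :=
  ∀ x < m, (σ x = true → vu (sideIdx σ true x) < u.length) ∧
    (σ x = false → vv (sideIdx σ false x) < v.length)

namespace InRange

variable {σ : ℕ → Bool} {u v : List A} {vu vv : ℕ → ℕ} {m : ℕ}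

theorem mono (h : InRange σ u v vu vv m) {m' : ℕ} (hm : m' ≤ m) : InRange σ u v vu vv m' :=
  fun x hx => h x (hx.trans_le hm)

theorem vcons_left (h : InRange σ u v vu vv (m - 1)) {p : ℕ} (hp : p < u.length) :
    InRange (vcons true σ) u v (vcons p vu) vv m := by
  rintro (_ | x) hx
  · simpa using hp
  · cases hσ : σ x <;> simpa [sideIdx_vcons_succ, hσ] using h x (by omega)

theorem vcons_right (h : InRange σ u v vu vv (m - 1)) {q : ℕ} (hq : q < v.length) :
    InRange (vcons false σ) u v vu (vcons q vv) m := by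
  rintro (_ | x) hx
  · simpa using hq
  · cases hσ : σ x <;> simpa [sideIdx_vcons_succ, hσ] using h x (by omega)

end InRange

/-- A term `(l, r)` stands for `⋀ l` evaluated in `u` and `⋀ r` evaluated in `v`. Conjunctions are
kept as lists because no quantifier-free sentence could stand for the empty one. -/
abbrev SplitDNF (A : Type) := List (List (FO A) × List (FO A))

def SatTerm (u v : List A) (vu vv : ℕ → ℕ) (p : List (FO A) × List (FO A)) : Prop :=
  (∀ f ∈ p.1, Sat u vu f) ∧ ∀ g ∈ p.2, Sat v vv g

def SatSplit (u v : List A) (vu vv : ℕ → ℕ) (L : SplitDNF A) : Prop :=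
  ∃ p ∈ L, SatTerm u v vu vv p

namespace SplitDNF

def conj (L₁ L₂ : SplitDNF A) : SplitDNF A :=
  L₁.flatMap fun p => L₂.map fun q => (p.1 ++ q.1, p.2 ++ q.2)

def negTerm (p : List (FO A) × List (FO A)) : SplitDNF A :=
  p.1.map (fun f => ([not f], [])) ++ p.2.map (fun g => ([], [not g]))

def neg (L : SplitDNF A) : SplitDNF A :=
  L.foldr (fun p N => conj (negTerm p) N) [([], [])]

def swap (L : SplitDNF A) : SplitDNF A := L.map Prod.swap

def exLeft (L : SplitDNF A) : SplitDNF A := L.map fun p => ([ex (bigAnd p.1)], p.2)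

def exRight (L : SplitDNF A) : SplitDNF A := (exLeft L.swap).swap

def allLeft (L : SplitDNF A) : SplitDNF A :=
  L.sublists.map fun S => ([all (bigOr (S.map fun p => bigAnd p.1))], S.flatMap Prod.snd)

def allRight (L : SplitDNF A) : SplitDNF A := (allLeft L.swap).swap

end SplitDNF

open SplitDNF

section Semantics

variable {u v : List A} {vu vv : ℕ → ℕ}

theorem satSplit_map {α : Type} {l : List α} {F : α → List (FO A) × List (FO A)} :
    SatSplit u v vu vv (l.map F) ↔ ∃ a ∈ l, SatTerm u v vu vv (F a) := by
  simp [SatSplit]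

theorem satSplit_append {L₁ L₂ : SplitDNF A} :
    SatSplit u v vu vv (L₁ ++ L₂) ↔ SatSplit u v vu vv L₁ ∨ SatSplit u v vu vv L₂ := by
  simp only [SatSplit, List.mem_append, or_and_right, exists_or]

theorem satTerm_append {p q : List (FO A) × List (FO A)} :
    SatTerm u v vu vv (p.1 ++ q.1, p.2 ++ q.2) ↔ SatTerm u v vu vv p ∧ SatTerm u v vu vv q := by
  simp only [SatTerm, List.forall_mem_append]
  tauto

theorem satSplit_conj {L₁ L₂ : SplitDNF A} :
    SatSplit u v vu vv (conj L₁ L₂) ↔ SatSplit u v vu vv L₁ ∧ SatSplit u v vu vv L₂ := by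
  simp only [SatSplit, conj, List.mem_flatMap, List.mem_map]
  constructor
  · rintro ⟨_, ⟨p, hp, q, hq, rfl⟩, h⟩
    rw [satTerm_append] at h
    exact ⟨⟨p, hp, h.1⟩, ⟨q, hq, h.2⟩⟩
  · rintro ⟨⟨p, hp, hp'⟩, ⟨q, hq, hq'⟩⟩
    exact ⟨_, ⟨p, hp, q, hq, rfl⟩, satTerm_append.2 ⟨hp', hq'⟩⟩

theorem satSplit_negTerm {p : List (FO A) × List (FO A)} :
    SatSplit u v vu vv (negTerm p) ↔ ¬ SatTerm u v vu vv p := by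
  rw [negTerm, satSplit_append, satSplit_map, satSplit_map]
  simp only [SatTerm, List.forall_mem_singleton, List.not_mem_nil, IsEmpty.forall_iff,
    implies_true, and_true, true_and, Sat]
  simp [imp_iff_not_or]

theorem satSplit_neg {L : SplitDNF A} :
    SatSplit u v vu vv (neg L) ↔ ¬ SatSplit u v vu vv L := by
  induction L with
  | nil => simp [neg, SatSplit, SatTerm]
  | cons p L ih =>
    rw [neg, List.foldr_cons, ← neg, satSplit_conj, satSplit_negTerm, ih]
    simp [SatSplit]

theorem satSplit_swap {L : SplitDNF A} :
    SatSplit u v vu vv L.swap ↔ SatSplit v u vv vu L := by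
  rw [SplitDNF.swap, satSplit_map]
  exact exists_congr fun _ => and_congr_right fun _ => And.comm

theorem satSplit_exLeft {L : SplitDNF A} :
    SatSplit u v vu vv (exLeft L) ↔ ∃ p < u.length, SatSplit u v (vcons p vu) vv L := by
  rw [exLeft, satSplit_map]
  simp only [SatSplit, SatTerm, List.forall_mem_singleton, sat_ex, sat_bigAnd]
  constructor
  · rintro ⟨q, hq, ⟨p, hp, h₁⟩, h₂⟩
    exact ⟨p, hp, q, hq, h₁, h₂⟩
  · rintro ⟨p, hp, q, hq, h₁, h₂⟩
    exact ⟨q, hq, ⟨p, hp, h₁⟩, h₂⟩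

theorem satSplit_exRight {L : SplitDNF A} :
    SatSplit u v vu vv (exRight L) ↔ ∃ q < v.length, SatSplit u v vu (vcons q vv) L := by
  simp only [exRight, satSplit_swap, satSplit_exLeft]

theorem satSplit_allLeft {L : SplitDNF A} :
    SatSplit u v vu vv (allLeft L) ↔ ∀ p < u.length, SatSplit u v (vcons p vu) vv L := by
  classical
  rw [allLeft, satSplit_map]
  simp only [List.mem_sublists, SatSplit, SatTerm, List.forall_mem_singleton, sat_all, sat_bigOr,
    List.mem_map, exists_exists_and_eq_and, sat_bigAnd, List.forall_mem_flatMap]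
  constructor
  · rintro ⟨S, hS, h₁, h₂⟩ p hp
    obtain ⟨q, hq, hq₁⟩ := h₁ p hp
    exact ⟨q, hS.subset hq, hq₁, h₂ q hq⟩
  · intro h
    refine ⟨L.filter fun q => ∀ g ∈ q.2, Sat v vv g, List.filter_sublist, fun p hp => ?_,
      fun q hq => of_decide_eq_true (List.mem_filter.1 hq).2⟩
    obtain ⟨q, hq, hq₁, hq₂⟩ := h p hp
    exact ⟨q, List.mem_filter.2 ⟨hq, decide_eq_true hq₂⟩, hq₁⟩

theorem satSplit_allRight {L : SplitDNF A} :
    SatSplit u v vu vv (allRight L) ↔ ∀ q < v.length, SatSplit u v vu (vcons q vv) L := by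
  simp only [allRight, satSplit_swap, satSplit_allLeft]

end Semantics

def decomp : FO A → (ℕ → Bool) → SplitDNF A
  | letter a x, σ =>
      if σ x then [([letter a (sideIdx σ true x)], [])]
      else [([], [letter a (sideIdx σ false x)])]
  | lt x y, σ =>
      match σ x, σ y with
      | true, true => [([lt (sideIdx σ true x) (sideIdx σ true y)], [])]
      | false, false => [([], [lt (sideIdx σ false x) (sideIdx σ false y)])]
      | true, false => [([], [])]
      | false, true => []
  | not φ, σ => neg (decomp φ σ)
  | and φ ψ, σ => conj (decomp φ σ) (decomp ψ σ)
  | or φ ψ, σ => decomp φ σ ++ decomp ψ σ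
  | ex φ, σ => exLeft (decomp φ (vcons true σ)) ++ exRight (decomp φ (vcons false σ))
  | all φ, σ => conj (allLeft (decomp φ (vcons true σ))) (allRight (decomp φ (vcons false σ)))

theorem sat_append_iff_satSplit (φ : FO A) (σ : ℕ → Bool) (u v : List A) (vu vv : ℕ → ℕ)
    (hr : InRange σ u v vu vv (fvBound φ)) :
    Sat (u ++ v) (mergeVal σ u.length vu vv) φ ↔ SatSplit u v vu vv (decomp φ σ) := by
  induction φ generalizing σ vu vv with
  | letter a x =>
    have hx := hr x (by simp [fvBound])
    cases hσ : σ x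
    · simp [Sat, decomp, mergeVal, hσ, SatSplit, SatTerm, List.getElem?_append_right]
    · simp [Sat, decomp, mergeVal, hσ, SatSplit, SatTerm, List.getElem?_append_left (hx.1 hσ)]
  | lt x y =>
    have hx := hr x (by simp [fvBound])
    have hy := hr y (by simp [fvBound])
    cases hσx : σ x <;> cases hσy : σ y <;>
      simp [Sat, decomp, mergeVal, hσx, hσy, SatSplit, SatTerm] at hx hy ⊢ <;> omega
  | not φ ih => rw [Sat, ih σ vu vv hr, decomp, satSplit_neg]
  | and φ ψ ihφ ihψ =>
    rw [Sat, ihφ σ vu vv (hr.mono (le_max_left _ _)), ihψ σ vu vv (hr.mono (le_max_right _ _)),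
      decomp, satSplit_conj]
  | or φ ψ ihφ ihψ =>
    rw [Sat, ihφ σ vu vv (hr.mono (le_max_left _ _)), ihψ σ vu vv (hr.mono (le_max_right _ _)),
      decomp, satSplit_append]
  | ex φ ih =>
    rw [sat_ex, List.length_append, Nat.exists_lt_add_iff, decomp, satSplit_append, satSplit_exLeft,
      satSplit_exRight]
    refine or_congr (exists_congr fun p => and_congr_right fun hp => ?_)
      (exists_congr fun q => and_congr_right fun hq => ?_)
    · rw [vcons_mergeVal_left, ih _ _ _ (hr.vcons_left hp)]
    · rw [vcons_mergeVal_right, ih _ _ _ (hr.vcons_right hq)]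
  | all φ ih =>
    rw [sat_all, List.length_append, Nat.forall_lt_add_iff, decomp, satSplit_conj,
      satSplit_allLeft, satSplit_allRight]
    refine and_congr (forall₂_congr fun p hp => ?_) (forall₂_congr fun q hq => ?_)
    · rw [vcons_mergeVal_left, ih _ _ _ (hr.vcons_left hp)]
    · rw [vcons_mergeVal_right, ih _ _ _ (hr.vcons_right hq)]

def ForallComp (P Q : FO A → Prop) (L : SplitDNF A) : Prop :=
  ∀ p ∈ L, (∀ f ∈ p.1, P f) ∧ ∀ g ∈ p.2, Q g

namespace ForallComp

variable {P Q P' Q' : FO A → Prop} {L L₁ L₂ : SplitDNF A}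

theorem mono (h : ForallComp P Q L) (hP : ∀ f, P f → P' f) (hQ : ∀ g, Q g → Q' g) :
    ForallComp P' Q' L :=
  fun p hp => ⟨fun f hf => hP f ((h p hp).1 f hf), fun g hg => hQ g ((h p hp).2 g hg)⟩

theorem append (h₁ : ForallComp P Q L₁) (h₂ : ForallComp P Q L₂) : ForallComp P Q (L₁ ++ L₂) :=
  List.forall_mem_append.2 ⟨h₁, h₂⟩

theorem conj (h₁ : ForallComp P Q L₁) (h₂ : ForallComp P Q L₂) : ForallComp P Q (conj L₁ L₂) := by
  simp only [ForallComp, SplitDNF.conj, List.forall_mem_flatMap, List.forall_mem_map,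
    List.forall_mem_append]
  exact fun p hp q hq =>
    ⟨⟨(h₁ p hp).1, (h₂ q hq).1⟩, ⟨(h₁ p hp).2, (h₂ q hq).2⟩⟩

theorem neg (hP : ∀ f, P f → P (not f)) (hQ : ∀ g, Q g → Q (not g)) (h : ForallComp P Q L) :
    ForallComp P Q (neg L) := by
  induction L with
  | nil => simp [ForallComp, SplitDNF.neg]
  | cons p L ih =>
    have hp := h p (by simp)
    refine ForallComp.conj ?_ (ih fun q hq => h q (by simp [hq]))
    simp only [ForallComp, negTerm, List.forall_mem_append, List.forall_mem_map,
      List.forall_mem_singleton, List.not_mem_nil, IsEmpty.forall_iff, implies_true, and_true,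
      true_and]
    exact ⟨fun f hf => hP f (hp.1 f hf), fun g hg => hQ g (hp.2 g hg)⟩

theorem swap (h : ForallComp P Q L) : ForallComp Q P L.swap := by
  simp only [ForallComp, SplitDNF.swap, List.forall_mem_map, Prod.fst_swap, Prod.snd_swap]
  exact fun p hp => (h p hp).symm

theorem exLeft (h : ForallComp P' Q L) (hP : ∀ l, (∀ f ∈ l, P' f) → P (ex (bigAnd l))) :
    ForallComp P Q (exLeft L) := by
  simp only [ForallComp, SplitDNF.exLeft, List.forall_mem_map, List.forall_mem_singleton]
  exact fun p hp => ⟨hP p.1 (h p hp).1, (h p hp).2⟩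

theorem exRight (h : ForallComp P Q' L) (hQ : ∀ l, (∀ f ∈ l, Q' f) → Q (ex (bigAnd l))) :
    ForallComp P Q (exRight L) :=
  (h.swap.exLeft hQ).swap

theorem allLeft (h : ForallComp P' Q L)
    (hP : ∀ S : SplitDNF A, (∀ p ∈ S, ∀ f ∈ p.1, P' f) →
      P (all (bigOr (S.map fun p => bigAnd p.1)))) :
    ForallComp P Q (allLeft L) := by
  simp only [ForallComp, SplitDNF.allLeft, List.forall_mem_map, List.mem_sublists,
    List.forall_mem_singleton, List.forall_mem_flatMap]
  exact fun S hS => ⟨hP S fun p hp => (h p (hS.subset hp)).1,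
    fun p hp => (h p (hS.subset hp)).2⟩

theorem allRight (h : ForallComp P Q' L)
    (hQ : ∀ S : SplitDNF A, (∀ p ∈ S, ∀ f ∈ p.1, Q' f) →
      Q (all (bigOr (S.map fun p => bigAnd p.1)))) :
    ForallComp P Q (allRight L) :=
  (h.swap.allLeft hQ).swap

end ForallComp

theorem qr_bigAnd_le {l : List (FO A)} {n : ℕ} (h : ∀ f ∈ l, qr f ≤ n) : qr (bigAnd l) ≤ n :=
  bigAnd_induction (Nat.zero_le n) (fun _ _ => max_le) h

theorem qr_bigOr_le {l : List (FO A)} {n : ℕ} (h : ∀ f ∈ l, qr f ≤ n) : qr (bigOr l) ≤ n :=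
  bigOr_induction (Nat.zero_le n) (fun _ _ => max_le) h

theorem forallComp_decomp_qr (φ : FO A) (σ : ℕ → Bool) :
    ForallComp (qr · ≤ qr φ) (qr · ≤ qr φ) (decomp φ σ) := by
  induction φ generalizing σ with
  | letter a x => cases hσ : σ x <;> simp [ForallComp, decomp, hσ, qr]
  | lt x y => cases hσx : σ x <;> cases hσy : σ y <;> simp [ForallComp, decomp, hσx, hσy, qr]
  | not φ ih => exact (ih σ).neg (fun _ => id) (fun _ => id)
  | and φ ψ ihφ ihψ =>
    exact ((ihφ σ).mono (fun _ h => le_max_of_le_left h) (fun _ h => le_max_of_le_left h)).conj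
      ((ihψ σ).mono (fun _ h => le_max_of_le_right h) (fun _ h => le_max_of_le_right h))
  | or φ ψ ihφ ihψ =>
    exact ((ihφ σ).mono (fun _ h => le_max_of_le_left h) (fun _ h => le_max_of_le_left h)).append
      ((ihψ σ).mono (fun _ h => le_max_of_le_right h) (fun _ h => le_max_of_le_right h))
  | ex φ ih =>
    have hsucc : ∀ f : FO A, qr f ≤ qr φ → qr f ≤ qr φ + 1 := fun _ h => h.trans (Nat.le_succ _)
    have hex : ∀ l : List (FO A), (∀ f ∈ l, qr f ≤ qr φ) → qr (ex (bigAnd l)) ≤ qr φ + 1 :=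
      fun _ hl => Nat.succ_le_succ (qr_bigAnd_le hl)
    exact (((ih _).mono (fun _ => id) hsucc).exLeft hex).append
      (((ih _).mono hsucc (fun _ => id)).exRight hex)
  | all φ ih =>
    have hsucc : ∀ f : FO A, qr f ≤ qr φ → qr f ≤ qr φ + 1 := fun _ h => h.trans (Nat.le_succ _)
    have hall : ∀ S : SplitDNF A, (∀ p ∈ S, ∀ f ∈ p.1, qr f ≤ qr φ) →
        qr (all (bigOr (S.map fun p => bigAnd p.1))) ≤ qr φ + 1 := fun S hS =>
      Nat.succ_le_succ (qr_bigOr_le (List.forall_mem_map.2 fun p hp => qr_bigAnd_le (hS p hp)))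
    exact (((ih _).mono (fun _ => id) hsucc).allLeft hall).conj
      (((ih _).mono hsucc (fun _ => id)).allRight hall)

theorem sideIdx_lt_of_lt {σ : ℕ → Bool} {b : Bool} {x m : ℕ} (hσ : σ x = b) (hx : x < m) :
    sideIdx σ b x < sideIdx σ b m := by
  have := sideIdx_mono σ b (Nat.succ_le_of_lt hx)
  rw [sideIdx_succ_of_eq hσ] at this
  omega

theorem fvBound_bigAnd_le {l : List (FO A)} {n : ℕ} (h : ∀ f ∈ l, fvBound f ≤ n) :
    fvBound (bigAnd l) ≤ max n 1 :=
  bigAnd_induction (le_max_right n 1) (fun _ _ => max_le)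
    fun f hf => (h f hf).trans (le_max_left n 1)

theorem fvBound_bigOr_le {l : List (FO A)} {n : ℕ} (h : ∀ f ∈ l, fvBound f ≤ max n 1) :
    fvBound (bigOr l) ≤ max n 1 :=
  bigOr_induction (le_max_right n 1) (fun _ _ => max_le) h

theorem fvBound_sub_one_le {σ : ℕ → Bool} {b : Bool} {m : ℕ} {f : FO A}
    (hf : fvBound f ≤ max (sideIdx (vcons b σ) b m) 1) : fvBound f - 1 ≤ sideIdx σ b (m - 1) := by
  have := sideIdx_vcons_self_le σ b m
  omega

theorem forallComp_decomp_fvBound (φ : FO A) (σ : ℕ → Bool) :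
    ForallComp (fvBound · ≤ sideIdx σ true (fvBound φ)) (fvBound · ≤ sideIdx σ false (fvBound φ))
      (decomp φ σ) := by
  induction φ generalizing σ with
  | letter a x =>
    cases hσ : σ x <;> simp [ForallComp, decomp, hσ, fvBound, sideIdx_lt_of_lt hσ]
  | lt x y =>
    cases hσx : σ x <;> cases hσy : σ y <;>
      simp [ForallComp, decomp, hσx, hσy, fvBound, sideIdx_lt_of_lt hσx, sideIdx_lt_of_lt hσy]
  | not φ ih => exact (ih σ).neg (fun _ => id) (fun _ => id)
  | and φ ψ ihφ ihψ =>
    exact ((ihφ σ).mono (fun _ h => h.trans (sideIdx_mono σ _ (le_max_left _ _)))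
        (fun _ h => h.trans (sideIdx_mono σ _ (le_max_left _ _)))).conj
      ((ihψ σ).mono (fun _ h => h.trans (sideIdx_mono σ _ (le_max_right _ _)))
        (fun _ h => h.trans (sideIdx_mono σ _ (le_max_right _ _))))
  | or φ ψ ihφ ihψ =>
    exact ((ihφ σ).mono (fun _ h => h.trans (sideIdx_mono σ _ (le_max_left _ _)))
        (fun _ h => h.trans (sideIdx_mono σ _ (le_max_left _ _)))).append
      ((ihψ σ).mono (fun _ h => h.trans (sideIdx_mono σ _ (le_max_right _ _)))
        (fun _ h => h.trans (sideIdx_mono σ _ (le_max_right _ _))))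
  | ex φ ih =>
    exact (((ih _).mono (fun _ => id)
        (fun _ h => h.trans (sideIdx_vcons_of_ne_le (by decide) _))).exLeft
          fun _ hl => fvBound_sub_one_le (fvBound_bigAnd_le hl)).append
      (((ih _).mono (fun _ h => h.trans (sideIdx_vcons_of_ne_le (by decide) _))
        (fun _ => id)).exRight fun _ hl => fvBound_sub_one_le (fvBound_bigAnd_le hl))
  | all φ ih =>
    have hall : ∀ (b : Bool) (S : SplitDNF A),
        (∀ p ∈ S, ∀ f ∈ p.1, fvBound f ≤ sideIdx (vcons b σ) b (fvBound φ)) →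
        fvBound (all (bigOr (S.map fun p => bigAnd p.1))) ≤ sideIdx σ b (fvBound φ - 1) :=
      fun _ S hS => fvBound_sub_one_le
        (fvBound_bigOr_le (List.forall_mem_map.2 fun p hp => fvBound_bigAnd_le (hS p hp)))
    exact (((ih _).mono (fun _ => id)
        (fun _ h => h.trans (sideIdx_vcons_of_ne_le (by decide) _))).allLeft (hall true)).conj
      (((ih _).mono (fun _ h => h.trans (sideIdx_vcons_of_ne_le (by decide) _))
        (fun _ => id)).allRight (hall false))

theorem forallComp_decomp_of_qf {φ : FO A} (h : QF φ) (σ : ℕ → Bool) :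
    ForallComp QF QF (decomp φ σ) := by
  induction φ generalizing σ with
  | letter a x => cases hσ : σ x <;> simp [ForallComp, decomp, hσ, QF]
  | lt x y => cases hσx : σ x <;> cases hσy : σ y <;> simp [ForallComp, decomp, hσx, hσy, QF]
  | not φ ih => exact (ih h σ).neg (fun _ => id) (fun _ => id)
  | and φ ψ ihφ ihψ => exact (ihφ h.1 σ).conj (ihψ h.2 σ)
  | or φ ψ ihφ ihψ => exact (ihφ h.1 σ).append (ihψ h.2 σ)
  | ex φ ih => exact h.elim
  | all φ ih => exact h.elim

theorem qf_verum : QF (verum : FO A) := trivial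

mutual

theorem IsSigma.forallComp_decomp {i : ℕ} {φ : FO A} (h : IsSigma i φ) (σ : ℕ → Bool) :
    ForallComp (IsSigma i) (IsSigma i) (decomp φ σ) :=
  match h with
  | .of_qf h => (forallComp_decomp_of_qf h σ).mono (fun _ => .of_qf) (fun _ => .of_qf)
  | .of_pi h => (h.forallComp_decomp σ).mono (fun _ => .of_pi) (fun _ => .of_pi)
  | .and hφ hψ => (hφ.forallComp_decomp σ).conj (hψ.forallComp_decomp σ)
  | .or hφ hψ => (hφ.forallComp_decomp σ).append (hψ.forallComp_decomp σ)
  | .ex h =>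
    have hex : ∀ l, (∀ f ∈ l, IsSigma _ f) → IsSigma _ (ex (bigAnd l)) := fun _ hl =>
      .ex (bigAnd_induction (.of_qf qf_verum) (fun _ _ => .and) hl)
    ((h.forallComp_decomp _).exLeft hex).append ((h.forallComp_decomp _).exRight hex)

theorem IsPi.forallComp_decomp {i : ℕ} {φ : FO A} (h : IsPi i φ) (σ : ℕ → Bool) :
    ForallComp (IsPi i) (IsPi i) (decomp φ σ) :=
  match h with
  | .of_qf h => (forallComp_decomp_of_qf h σ).mono (fun _ => .of_qf) (fun _ => .of_qf)
  | .of_sigma h => (h.forallComp_decomp σ).mono (fun _ => .of_sigma) (fun _ => .of_sigma)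
  | .and hφ hψ => (hφ.forallComp_decomp σ).conj (hψ.forallComp_decomp σ)
  | .or hφ hψ => (hφ.forallComp_decomp σ).append (hψ.forallComp_decomp σ)
  | .all h =>
    have hall : ∀ S : SplitDNF A, (∀ p ∈ S, ∀ f ∈ p.1, IsPi _ f) →
        IsPi _ (all (bigOr (S.map fun p => bigAnd p.1))) := fun _ hS =>
      .all (bigOr_induction (.of_qf trivial) (fun _ _ => .or) (List.forall_mem_map.2 fun p hp =>
        bigAnd_induction (.of_qf qf_verum) (fun _ _ => .and) (hS p hp)))
    ((h.forallComp_decomp _).allLeft hall).conj ((h.forallComp_decomp _).allRight hall)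

end

theorem forallComp_decomp_of_isSentence {i : ℕ} {φ : FO A} (hφ : IsSigma i φ)
    (hs : IsSentence φ) (σ : ℕ → Bool) :
    ForallComp (fun f => IsSigma i f ∧ qr f ≤ qr φ ∧ IsSentence f)
      (fun f => IsSigma i f ∧ qr f ≤ qr φ ∧ IsSentence f) (decomp φ σ) := by
  intro p hp
  have hsig := hφ.forallComp_decomp σ p hp
  have hqr := forallComp_decomp_qr φ σ p hp
  have hfv := forallComp_decomp_fvBound φ σ p hp
  simp only [show fvBound φ = 0 from hs, sideIdx_zero, Nat.le_zero] at hfv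
  exact ⟨fun f hf => ⟨hsig.1 f hf, hqr.1 f hf, hfv.1 f hf⟩,
    fun g hg => ⟨hsig.2 g hg, hqr.2 g hg, hfv.2 g hg⟩⟩

theorem sle_append {i k : ℕ} {u u' v v' : List A} (hu : sle i k u u') (hv : sle i k v v') :
    sle i k (u ++ v) (u' ++ v') := by
  intro φ hφ hqr hs hsat
  have hsplit : ∀ u v : List A, Sat (u ++ v) (fun _ => 0) φ ↔
      SatSplit u v (fun _ => 0) (fun _ => 0) (decomp φ fun _ => true) := fun u v =>
    sat_append_iff_satSplit φ (fun _ => true) u v (fun _ => 0) (fun _ => 0) fun x hx =>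
      (Nat.not_lt_zero x (hs ▸ hx)).elim
  obtain ⟨p, hp, hpu, hpv⟩ := (hsplit u v).1 hsat
  have hcomp := forallComp_decomp_of_isSentence hφ hs _ p hp
  refine (hsplit u' v').2 ⟨p, hp, fun f hf => ?_, fun g hg => ?_⟩
  · obtain ⟨hfsig, hfqr, hfs⟩ := hcomp.1 f hf
    exact hu f hfsig (hfqr.trans hqr) hfs (hpu f hf)
  · obtain ⟨hgsig, hgqr, hgs⟩ := hcomp.2 g hg
    exact hv g hgsig (hgqr.trans hqr) hgs (hpv g hg)

end FO

/-- The set of `i`-chains of length `n` for a morphism `α : A* → M` into a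
finite monoid is a submonoid of `M^n` under componentwise multiplication: the
constant tuple `(1,…,1)` is an `i`-chain, and the componentwise product of two
`i`-chains is an `i`-chain. -/
theorem chains_submonoid {A : Type} [Fintype A] {M : Type} [Monoid M] [Finite M]
    (i : ℕ) (α : List A → M) (hα1 : α [] = 1)
    (hα : ∀ u v : List A, α (u ++ v) = α u * α v) (n : ℕ) :
    IsChainTup i α (fun _ : Fin n => (1 : M)) ∧
    (∀ s t : Fin n → M, IsChainTup i α s → IsChainTup i α t →
      IsChainTup i α (s * t)) := by
  constructor
  · intro k
    exact ⟨fun _ => [], fun _ => hα1, fun _ _ _ _ _ _ hsat => hsat⟩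
  · intro s t hs ht k
    obtain ⟨ws, hws, hs⟩ := hs k
    obtain ⟨wt, hwt, ht⟩ := ht k
    exact ⟨fun j => ws j ++ wt j, fun j => by rw [hα, hws, hwt, Pi.mul_apply],
      fun j hj => FO.sle_append (hs j hj) (ht j hj)⟩
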